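/- The coefficient of the l-th Legendre polynomial in the expansion of the function x ↦ ((1-x)/2)^S on [-1,1] is C_l = (-1)^l (2l+1) S! S! / ((S-l)! (S+l+1)!); that is, ∫_{-1}^{1} P_l(x) ((1-x)/2)^S dx = 2(-1)^l S! S! / ((S-l)!(S+l+1)!) for 0 ≤ l ≤ S. -/

import Mathlib

/-!
Rodrigues' formula and `l` integrations by parts move the `l` derivatives from `(x² - 1)^l`
onto `(1 - x)^S`; the boundary terms vanish because `(x² - 1)^(l - j)` divides the `j`-th
derivative of `(x² - 1)^l`. What remains is a multiple of the beta integral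
`∫ (1 + x)^l (1 - x)^S`, whose recurrence in the exponents is one more integration by parts.
-/

open Polynomial

/-- The `l`-th Legendre polynomial via the Rodrigues formula. -/
noncomputable def legendre (l : ℕ) : ℝ → ℝ :=
  fun x => (1 / (2 ^ l * (l.factorial : ℝ))) *
    iteratedDeriv l (fun y => (y ^ 2 - 1) ^ l) x

namespace Polynomial

theorem iteratedDeriv_eval (p : ℝ[X]) (n : ℕ) :
    iteratedDeriv n (fun x => p.eval x) = fun x => (derivative^[n] p).eval x := by
  induction n with
  | zero => simp
  | succ n ih =>
    rw [iteratedDeriv_succ, ih, Function.iterate_succ_apply']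
    funext x
    exact Polynomial.deriv _

theorem eval_iterate_derivative_sq_sub_one_pow_eq_zero {R : Type*} [CommRing R]
    {j l : ℕ} (hj : j < l) {x : R} (hx : x ^ 2 = 1) :
    (derivative^[j] ((X ^ 2 - 1) ^ l : R[X])).eval x = 0 := by
  obtain ⟨q, hq⟩ := pow_sub_dvd_iterate_derivative_pow ((X ^ 2 - 1 : R[X])) l j
  rw [hq, eval_mul, eval_pow]
  simp [hx, zero_pow (Nat.sub_ne_zero_of_lt hj)]

theorem eval_iterate_derivative_one_sub_X_pow {R : Type*} [CommRing R] (n k : ℕ) (x : R) :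
    (derivative^[k] ((1 - X) ^ n : R[X])).eval x =
      (-1) ^ k * n.descFactorial k * (1 - x) ^ (n - k) := by
  have h := iterate_derivative_comp_one_sub_X ((X : R[X]) ^ n) k
  rw [X_pow_comp, iterate_derivative_X_pow_eq_natCast_mul, mul_comp, X_pow_comp] at h
  simp [h, mul_assoc]

variable {a b : ℝ}

theorem integral_eval_derivative_mul_eval (p q : ℝ[X]) (ha : (p * q).eval a = 0)
    (hb : (p * q).eval b = 0) :
    ∫ x in a..b, (derivative p).eval x * q.eval x =
      -∫ x in a..b, p.eval x * (derivative q).eval x := by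
  have h := intervalIntegral.integral_eq_sub_of_hasDerivAt (fun x _ => (p * q).hasDerivAt x)
    ((derivative (p * q)).continuous.intervalIntegrable a b)
  simp only [derivative_mul, eval_add, eval_mul, ha, hb, sub_zero] at h
  rw [intervalIntegral.integral_add
    (((derivative p).continuous.fun_mul q.continuous).intervalIntegrable a b)
    ((p.continuous.fun_mul (derivative q).continuous).intervalIntegrable a b)] at h
  linarith

theorem integral_eval_iterate_derivative_mul_eval (p q : ℝ[X]) (n : ℕ)
    (hp : ∀ j < n, (derivative^[j] p).eval a = 0 ∧ (derivative^[j] p).eval b = 0) :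
    ∫ x in a..b, (derivative^[n] p).eval x * q.eval x =
      (-1) ^ n * ∫ x in a..b, p.eval x * (derivative^[n] q).eval x := by
  induction n generalizing q with
  | zero => simp
  | succ n ih =>
    obtain ⟨ha, hb⟩ := hp n n.lt_succ_self
    rw [Function.iterate_succ_apply', integral_eval_derivative_mul_eval _ _ (by simp [ha])
      (by simp [hb]), ih _ fun j hj => hp j (hj.trans n.lt_succ_self),
      Function.iterate_succ_apply, pow_succ]
    ring

end Polynomial

theorem succ_mul_integral_one_add_pow_succ_mul_one_sub_pow (m n : ℕ) :
    (n + 1) * ∫ x in (-1 : ℝ)..1, (1 + x) ^ (m + 1) * (1 - x) ^ n =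
      (m + 1) * ∫ x in (-1 : ℝ)..1, (1 + x) ^ m * (1 - x) ^ (n + 1) := by
  have h := integral_eval_derivative_mul_eval (a := -1) (b := 1)
    ((1 + X : ℝ[X]) ^ (m + 1)) ((1 - X : ℝ[X]) ^ (n + 1)) (by simp) (by simp)
  simp only [derivative_pow, derivative_add, derivative_sub, derivative_one, derivative_X,
    eval_mul, eval_pow, eval_add, eval_sub, eval_zero, eval_one, eval_X, eval_C,
    Nat.add_sub_cancel, ← intervalIntegral.integral_neg] at h
  rw [← intervalIntegral.integral_const_mul, ← intervalIntegral.integral_const_mul]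
  refine (intervalIntegral.integral_congr fun x _ => ?_).trans
    (h.symm.trans (intervalIntegral.integral_congr fun x _ => ?_)) <;> (push_cast; ring)

theorem integral_one_add_pow_mul_one_sub_pow (m n : ℕ) :
    ∫ x in (-1 : ℝ)..1, (1 + x) ^ m * (1 - x) ^ n =
      2 ^ (m + n + 1) * m.factorial * n.factorial / (m + n + 1).factorial := by
  induction m generalizing n with
  | zero =>
    have h := intervalIntegral.integral_comp_sub_left (fun y : ℝ => y ^ n) (a := -1) (b := 1) 1
    simp only [pow_zero, one_mul] at h ⊢
    rw [h, integral_pow, zero_add, Nat.factorial_zero, Nat.factorial_succ]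
    push_cast
    field_simp
    norm_num
  | succ m ih =>
    have h := succ_mul_integral_one_add_pow_succ_mul_one_sub_pow m n
    rw [ih, show m + (n + 1) + 1 = m + 1 + n + 1 by ring] at h
    rw [Nat.factorial_succ n] at h
    rw [Nat.factorial_succ m]
    push_cast at h ⊢
    field_simp at h ⊢
    linear_combination h

theorem legendre_eq_eval (l : ℕ) (x : ℝ) :
    legendre l x =
      (2 ^ l * l.factorial : ℝ)⁻¹ * (derivative^[l] ((X ^ 2 - 1) ^ l : ℝ[X])).eval x := by
  have h : (fun y : ℝ => (y ^ 2 - 1) ^ l) = fun y => ((X ^ 2 - 1) ^ l : ℝ[X]).eval y := by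
    simp
  rw [legendre, h, iteratedDeriv_eval, one_div]

theorem integral_legendre_mul_eval (l : ℕ) (q : ℝ[X]) :
    ∫ x in (-1 : ℝ)..1, legendre l x * q.eval x =
      (-1) ^ l / (2 ^ l * l.factorial) *
        ∫ x in (-1 : ℝ)..1, (x ^ 2 - 1) ^ l * (derivative^[l] q).eval x := by
  simp_rw [legendre_eq_eval, mul_assoc]
  rw [intervalIntegral.integral_const_mul, integral_eval_iterate_derivative_mul_eval _ _ l
    fun j hj => ⟨eval_iterate_derivative_sq_sub_one_pow_eq_zero hj (by norm_num),
      eval_iterate_derivative_sq_sub_one_pow_eq_zero hj (by norm_num)⟩]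
  simp only [eval_pow, eval_sub, eval_X, eval_one, div_eq_mul_inv, mul_inv_rev]
  ring

theorem integral_legendre_mul_one_sub_pow {l S : ℕ} (hl : l ≤ S) :
    ∫ x in (-1 : ℝ)..1, legendre l x * (1 - x) ^ S =
      (-1) ^ l * 2 ^ (S + 1) * S.descFactorial l * S.factorial / (S + l + 1).factorial := by
  have h := integral_legendre_mul_eval l ((1 - X) ^ S)
  simp only [eval_pow, eval_sub, eval_one, eval_X, eval_iterate_derivative_one_sub_X_pow] at h
  have hintegrand : ∀ x : ℝ,
      (x ^ 2 - 1) ^ l * ((-1) ^ l * S.descFactorial l * (1 - x) ^ (S - l)) =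
        S.descFactorial l * ((1 + x) ^ l * (1 - x) ^ S) := by
    intro x
    calc _ = S.descFactorial l * (((1 + x) * (1 - x)) ^ l * (1 - x) ^ (S - l)) := by
          rw [show (1 + x) * (1 - x) = -1 * (x ^ 2 - 1) by ring, mul_pow]
          ring
      _ = _ := by rw [mul_pow, mul_assoc, ← pow_add, Nat.add_sub_cancel' hl]
  simp_rw [hintegrand, intervalIntegral.integral_const_mul,
    integral_one_add_pow_mul_one_sub_pow] at h
  rw [h, add_comm l S]
  field_simp
  ring

theorem stmt_6 (S l : ℕ) (hl : l ≤ S) :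
    ∫ x in (-1 : ℝ)..1, legendre l x * ((1 - x) / 2) ^ S =
      2 * (-1) ^ l * (S.factorial : ℝ) * (S.factorial : ℝ) /
        ((S - l).factorial * (S + l + 1).factorial) := by
  simp_rw [div_pow, ← mul_div_assoc]
  have hdesc : (S.descFactorial l : ℝ) = S.factorial / (S - l).factorial := by
    rw [eq_div_iff (by positivity), mul_comm, ← Nat.cast_mul, Nat.factorial_mul_descFactorial hl]
  rw [intervalIntegral.integral_div, integral_legendre_mul_one_sub_pow hl, hdesc]
  field_simp
  ring
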